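/- arXiv:2303.02682 — 4 statements merged into one kernel-verified Lean document; each statement's English description precedes it below -/
import Mathlib

section
/- Let H be a complex Hilbert space, L and M closed linear subspaces of H, Q = L ∩ M, and suppose the orthogonal complements L ⊖ Q of Q in L and M ⊖ Q of Q in M are both nontrivial. If the inclination c(L,M) satisfies c(L,M) < 1, then the sum L + M = { x ∈ H : x = x_L + x_M, x_L ∈ L, x_M ∈ M } is a closed subset of H (hence a closed linear subspace of H). -/
/-!
Put `Q = L ⊓ M` and `M' = M ⊓ Qᗮ`. Since `Q ≤ L`, the sum `L + M` equals `L + M'`. Splitting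
`x ∈ L` along `Q ⊕ Qᗮ` only shrinks `‖x‖` and does not change `⟪x, v⟫` for `v ∈ M'`, so
`|⟪x, v⟫| ≤ c ‖x‖ ‖v‖` on all of `L × M'`, with `c = c(L,M) < 1`. Expanding `‖x + v‖²` then gives
`(1 - c)(‖x‖² + ‖v‖²) ≤ ‖x + v‖²`: the addition map `L × M' → H` is bounded below, hence has
closed range.
-/

open scoped InnerProductSpace Pointwise

/-- The inclination `c(L,M)` of two subspaces `L`, `M` of a complex Hilbert space:
the supremum of `|⟪u,v⟫| / (‖u‖‖v‖)` over nonzero `u ∈ L ⊖ Q` and nonzero `v ∈ M ⊖ Q`,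
where `Q = L ⊓ M`. -/
noncomputable def inclination {H : Type*} [NormedAddCommGroup H] [InnerProductSpace ℂ H]
    (L M : Submodule ℂ H) : ℝ :=
  sSup {r : ℝ | ∃ u ∈ L ⊓ (L ⊓ M)ᗮ, ∃ v ∈ M ⊓ (L ⊓ M)ᗮ,
    u ≠ 0 ∧ v ≠ 0 ∧ r = ‖⟪u, v⟫_ℂ‖ / (‖u‖ * ‖v‖)}

section InnerProductSpace

variable {𝕜 E : Type*} [RCLike 𝕜] [NormedAddCommGroup E] [InnerProductSpace 𝕜 E]

theorem one_sub_mul_sq_add_sq_le_norm_add_sq {c : ℝ} (hc : 0 ≤ c) {x y : E}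
    (h : ‖⟪x, y⟫_𝕜‖ ≤ c * (‖x‖ * ‖y‖)) : (1 - c) * (‖x‖ ^ 2 + ‖y‖ ^ 2) ≤ ‖x + y‖ ^ 2 := by
  have hre : -‖⟪x, y⟫_𝕜‖ ≤ RCLike.re ⟪x, y⟫_𝕜 := neg_le_of_abs_le (RCLike.abs_re_le_norm _)
  have hamgm : 2 * (‖x‖ * ‖y‖) ≤ ‖x‖ ^ 2 + ‖y‖ ^ 2 := by nlinarith [sq_nonneg (‖x‖ - ‖y‖)]
  rw [norm_add_sq (𝕜 := 𝕜)]
  nlinarith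

theorem sqrt_one_sub_mul_max_le_norm_add {c : ℝ} (hc : 0 ≤ c) (hc1 : c < 1) {x y : E}
    (h : ‖⟪x, y⟫_𝕜‖ ≤ c * (‖x‖ * ‖y‖)) : √(1 - c) * max ‖x‖ ‖y‖ ≤ ‖x + y‖ := by
  have hmax : max ‖x‖ ‖y‖ ^ 2 ≤ ‖x‖ ^ 2 + ‖y‖ ^ 2 := by
    rcases max_cases ‖x‖ ‖y‖ with ⟨hm, -⟩ | ⟨hm, -⟩ <;> rw [hm] <;>
      nlinarith [sq_nonneg ‖x‖, sq_nonneg ‖y‖]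
  refine abs_le_of_sq_le_sq' ?_ (norm_nonneg _) |>.2
  calc (√(1 - c) * max ‖x‖ ‖y‖) ^ 2 = (1 - c) * max ‖x‖ ‖y‖ ^ 2 := by
        rw [mul_pow, Real.sq_sqrt (by linarith)]
    _ ≤ (1 - c) * (‖x‖ ^ 2 + ‖y‖ ^ 2) := by gcongr
    _ ≤ ‖x + y‖ ^ 2 := one_sub_mul_sq_add_sq_le_norm_add_sq hc h

namespace Submodule

theorem isClosed_sup_of_norm_inner_le {K N : Submodule 𝕜 E} [CompleteSpace K] [CompleteSpace N]
    {c : ℝ} (hc : 0 ≤ c) (hc1 : c < 1) (h : ∀ x ∈ K, ∀ y ∈ N, ‖⟪x, y⟫_𝕜‖ ≤ c * (‖x‖ * ‖y‖)) :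
    IsClosed ((K ⊔ N : Submodule 𝕜 E) : Set E) := by
  let f : K × N →L[𝕜] E := K.subtypeL.coprod N.subtypeL
  have hrange : Set.range f = ((K ⊔ N : Submodule 𝕜 E) : Set E) := by
    ext z
    simp [f, Submodule.mem_sup]
  have hsqrt : 0 < √(1 - c) := Real.sqrt_pos.2 (by linarith)
  have hbound : ∀ p : K × N, ‖p‖ ≤ (√(1 - c))⁻¹.toNNReal * ‖f p‖ := fun p ↦ by
    rw [Real.coe_toNNReal _ (by positivity), Prod.norm_def, inv_mul_eq_div, le_div_iff₀ hsqrt,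
      mul_comm]
    exact sqrt_one_sub_mul_max_le_norm_add hc hc1 (h _ p.1.2 _ p.2.2)
  rw [← hrange]
  exact (f.antilipschitz_of_bound hbound).isClosed_range f.uniformContinuous

theorem norm_inner_le_mul_of_bound_on_inf_orthogonal {L M Q : Submodule 𝕜 E}
    [Q.HasOrthogonalProjection] (hQL : Q ≤ L) {c : ℝ} (hc : 0 ≤ c)
    (h : ∀ u ∈ L ⊓ Qᗮ, ∀ v ∈ M ⊓ Qᗮ, ‖⟪u, v⟫_𝕜‖ ≤ c * (‖u‖ * ‖v‖))
    {x v : E} (hx : x ∈ L) (hv : v ∈ M ⊓ Qᗮ) : ‖⟪x, v⟫_𝕜‖ ≤ c * (‖x‖ * ‖v‖) := by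
  let u := Qᗮ.starProjection x
  have huL : u ∈ L := by
    rw [show u = x - Q.starProjection x from starProjection_orthogonal_val x]
    exact L.sub_mem hx (hQL (Q.starProjection_apply_mem x))
  have hinner : ⟪x, v⟫_𝕜 = ⟪u, v⟫_𝕜 := by
    rw [inner_starProjection_left_eq_right, starProjection_eq_self_iff.2 hv.2]
  calc ‖⟪x, v⟫_𝕜‖ = ‖⟪u, v⟫_𝕜‖ := by rw [hinner]
    _ ≤ c * (‖u‖ * ‖v‖) := h u ⟨huL, Qᗮ.starProjection_apply_mem x⟩ v hv
    _ ≤ c * (‖x‖ * ‖v‖) := by gcongr; exact Qᗮ.norm_starProjection_apply_le x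

theorem sup_eq_sup_inf_orthogonal_inf (L M : Submodule 𝕜 E) [(L ⊓ M).HasOrthogonalProjection] :
    L ⊔ M = L ⊔ M ⊓ (L ⊓ M)ᗮ := by
  conv_lhs => rw [← sup_orthogonal_inf_of_hasOrthogonalProjection (inf_le_right : L ⊓ M ≤ M),
    ← sup_assoc, sup_eq_left.2 (inf_le_left : L ⊓ M ≤ L), inf_comm]

end Submodule

end InnerProductSpace

section Inclination

variable {H : Type*} [NormedAddCommGroup H] [InnerProductSpace ℂ H]

theorem bddAbove_inclination_set (L M : Submodule ℂ H) :
    BddAbove {r : ℝ | ∃ u ∈ L ⊓ (L ⊓ M)ᗮ, ∃ v ∈ M ⊓ (L ⊓ M)ᗮ,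
      u ≠ 0 ∧ v ≠ 0 ∧ r = ‖⟪u, v⟫_ℂ‖ / (‖u‖ * ‖v‖)} := by
  refine ⟨1, ?_⟩
  rintro r ⟨u, -, v, -, hu, hv, rfl⟩
  rw [div_le_one (by positivity)]
  exact norm_inner_le_norm u v

theorem inclination_nonneg (L M : Submodule ℂ H) : 0 ≤ inclination L M := by
  refine Real.sSup_nonneg ?_
  rintro r ⟨u, -, v, -, -, -, rfl⟩
  positivity

theorem norm_inner_le_inclination_mul {L M : Submodule ℂ H} {u v : H}
    (hu : u ∈ L ⊓ (L ⊓ M)ᗮ) (hv : v ∈ M ⊓ (L ⊓ M)ᗮ) :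
    ‖⟪u, v⟫_ℂ‖ ≤ inclination L M * (‖u‖ * ‖v‖) := by
  rcases eq_or_ne u 0 with rfl | hu0
  · simp
  rcases eq_or_ne v 0 with rfl | hv0
  · simp
  rw [← div_le_iff₀ (by positivity)]
  exact le_csSup (bddAbove_inclination_set L M) ⟨u, hu, v, hv, hu0, hv0, rfl⟩

end Inclination

theorem stmt_0_general {H : Type*} [NormedAddCommGroup H] [InnerProductSpace ℂ H] [CompleteSpace H]
    (L M : Submodule ℂ H) (hL : IsClosed (L : Set H)) (hM : IsClosed (M : Set H))
    (hc : inclination L M < 1) :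
    IsClosed ((L : Set H) + (M : Set H)) := by
  set Q := L ⊓ M
  have : CompleteSpace Q := (hL.inter hM).completeSpace_coe
  have : CompleteSpace L := hL.completeSpace_coe
  have : CompleteSpace ↥(M ⊓ Qᗮ) := (hM.inter Q.isClosed_orthogonal).completeSpace_coe
  rw [← Submodule.coe_sup, Submodule.sup_eq_sup_inf_orthogonal_inf]
  exact Submodule.isClosed_sup_of_norm_inner_le (inclination_nonneg L M) hc
    fun x hx v hv ↦ Submodule.norm_inner_le_mul_of_bound_on_inf_orthogonal inf_le_left
      (inclination_nonneg L M) (fun u hu w hw ↦ norm_inner_le_inclination_mul hu hw) hx hv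

theorem stmt_0 {H : Type*} [NormedAddCommGroup H] [InnerProductSpace ℂ H] [CompleteSpace H]
    (L M : Submodule ℂ H) (hL : IsClosed (L : Set H)) (hM : IsClosed (M : Set H))
    (hLQ : ∃ u ∈ L ⊓ (L ⊓ M)ᗮ, u ≠ 0) (hMQ : ∃ v ∈ M ⊓ (L ⊓ M)ᗮ, v ≠ 0)
    (hc : inclination L M < 1) :
    IsClosed ((L : Set H) + (M : Set H)) :=
  stmt_0_general L M hL hM hc
end

section
/- Let H be a complex Hilbert space, L and M closed linear subspaces with Q = L ∩ M, and c = c(L,M) < 1. If x = ŷ + u + v where ŷ ∈ Q, u ∈ L ⊖ Q, and v ∈ M ⊖ Q, then ‖ŷ‖ ≤ ‖x‖, ‖u‖ ≤ ‖x‖ / √(1 − c²), and ‖v‖ ≤ ‖x‖ / √(1 − c²). -/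
open scoped InnerProductSpace Pointwise

theorem stmt_1 {H : Type*} [NormedAddCommGroup H] [InnerProductSpace ℂ H] [CompleteSpace H]
    (L M : Submodule ℂ H) (hL : IsClosed (L : Set H)) (hM : IsClosed (M : Set H))
    (hLQ : ∃ u ∈ L ⊓ (L ⊓ M)ᗮ, u ≠ 0) (hMQ : ∃ v ∈ M ⊓ (L ⊓ M)ᗮ, v ≠ 0)
    (hc : inclination L M < 1)
    (x y u v : H) (hy : y ∈ L ⊓ M) (hu : u ∈ L ⊓ (L ⊓ M)ᗮ) (hv : v ∈ M ⊓ (L ⊓ M)ᗮ)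
    (hx : x = y + u + v) :
    ‖y‖ ≤ ‖x‖ ∧ ‖u‖ ≤ ‖x‖ / Real.sqrt (1 - inclination L M ^ 2) ∧
      ‖v‖ ≤ ‖x‖ / Real.sqrt (1 - inclination L M ^ 2) := by
  set c := inclination L M with hcdef
  set S := {r : ℝ | ∃ u ∈ L ⊓ (L ⊓ M)ᗮ, ∃ v ∈ M ⊓ (L ⊓ M)ᗮ,
    u ≠ 0 ∧ v ≠ 0 ∧ r = ‖⟪u, v⟫_ℂ‖ / (‖u‖ * ‖v‖)} with hSdef
  have hbdd : BddAbove S := by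
    refine ⟨1, fun r hr => ?_⟩
    obtain ⟨a, ha, b, hb, ha0, hb0, rfl⟩ := hr
    rw [div_le_one (mul_pos (norm_pos_iff.mpr ha0) (norm_pos_iff.mpr hb0))]
    exact norm_inner_le_norm a b
  have hc0 : 0 ≤ c := by
    obtain ⟨a, ha, ha0⟩ := hLQ
    obtain ⟨b, hb, hb0⟩ := hMQ
    have hmem : ‖⟪a, b⟫_ℂ‖ / (‖a‖ * ‖b‖) ∈ S := ⟨a, ha, b, hb, ha0, hb0, rfl⟩
    have := le_csSup hbdd hmem
    have h0 : (0:ℝ) ≤ ‖⟪a, b⟫_ℂ‖ / (‖a‖ * ‖b‖) := by positivity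
    exact h0.trans this
  have hkey : ∀ a ∈ L ⊓ (L ⊓ M)ᗮ, ∀ b ∈ M ⊓ (L ⊓ M)ᗮ, ‖⟪a, b⟫_ℂ‖ ≤ c * (‖a‖ * ‖b‖) := by
    intro a ha b hb
    by_cases ha0 : a = 0
    · simp [ha0]
    by_cases hb0 : b = 0
    · simp [hb0]
    have hmem : ‖⟪a, b⟫_ℂ‖ / (‖a‖ * ‖b‖) ∈ S := ⟨a, ha, b, hb, ha0, hb0, rfl⟩
    have := le_csSup hbdd hmem
    have hcS : c = sSup S := rfl
    rw [div_le_iff₀ (mul_pos (norm_pos_iff.mpr ha0) (norm_pos_iff.mpr hb0)), ← hcS] at this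
    linarith
  -- orthogonality of y with u and v
  have hyu : ⟪y, u⟫_ℂ = 0 := hu.2 y hy
  have hyv : ⟪y, v⟫_ℂ = 0 := hv.2 y hy
  have hyuv : ⟪y, u + v⟫_ℂ = 0 := by rw [inner_add_right, hyu, hyv, add_zero]
  have h1 : ‖x‖ ^ 2 = ‖y‖ ^ 2 + ‖u + v‖ ^ 2 := by
    rw [hx, add_assoc]
    have := norm_add_sq_eq_norm_sq_add_norm_sq_of_inner_eq_zero y (u + v) hyuv
    nlinarith [this]
  have hxy : ‖y‖ ≤ ‖x‖ := by
    have h2 : ‖y‖ ^ 2 ≤ ‖x‖ ^ 2 := by nlinarith [sq_nonneg ‖u + v‖]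
    nlinarith [norm_nonneg y, norm_nonneg x]
  have hre : -(c * (‖u‖ * ‖v‖)) ≤ (⟪u, v⟫_ℂ).re := by
    have h1 : |(⟪u, v⟫_ℂ).re| ≤ ‖⟪u, v⟫_ℂ‖ := Complex.abs_re_le_norm _
    have h2 := hkey u hu v hv
    have := neg_abs_le (⟪u, v⟫_ℂ).re
    linarith
  have hnuv : ‖u + v‖ ^ 2 = ‖u‖ ^ 2 + 2 * (⟪u, v⟫_ℂ).re + ‖v‖ ^ 2 := by
    have := norm_add_sq (𝕜 := ℂ) u v
    simpa using this
  have hs : (0:ℝ) < 1 - c ^ 2 := by nlinarith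
  have hsqrt : (0:ℝ) < Real.sqrt (1 - c ^ 2) := Real.sqrt_pos.mpr hs
  have huv_le : ‖u + v‖ ^ 2 ≤ ‖x‖ ^ 2 := by nlinarith [sq_nonneg ‖y‖]
  have main : ∀ a b : H, ‖a + b‖ ^ 2 = ‖a‖ ^ 2 + 2 * (⟪a, b⟫_ℂ).re + ‖b‖ ^ 2 →
      -(c * (‖a‖ * ‖b‖)) ≤ (⟪a, b⟫_ℂ).re → ‖a + b‖ ^ 2 ≤ ‖x‖ ^ 2 →
      ‖a‖ ≤ ‖x‖ / Real.sqrt (1 - c ^ 2) := by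
    intro a b hn hr hle
    rw [le_div_iff₀ hsqrt]
    have hsq : (‖a‖ * Real.sqrt (1 - c ^ 2)) ^ 2 ≤ ‖x‖ ^ 2 := by
      have : Real.sqrt (1 - c ^ 2) ^ 2 = 1 - c ^ 2 := Real.sq_sqrt hs.le
      rw [mul_pow, this]
      nlinarith [sq_nonneg (‖b‖ - c * ‖a‖), sq_nonneg ‖a‖]
    have h0 : (0:ℝ) ≤ ‖a‖ * Real.sqrt (1 - c ^ 2) := by positivity
    nlinarith [norm_nonneg x]
  have hvu_re : -(c * (‖v‖ * ‖u‖)) ≤ (⟪v, u⟫_ℂ).re := by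
    have hre2 : (⟪v, u⟫_ℂ).re = (⟪u, v⟫_ℂ).re := by
      rw [← inner_conj_symm v u, Complex.conj_re]
    rw [hre2]
    linarith [hre]
  have hnvu : ‖v + u‖ ^ 2 = ‖v‖ ^ 2 + 2 * (⟪v, u⟫_ℂ).re + ‖u‖ ^ 2 := by
    have := norm_add_sq (𝕜 := ℂ) v u
    simpa using this
  have hvu_le : ‖v + u‖ ^ 2 ≤ ‖x‖ ^ 2 := by rw [add_comm]; exact huv_le
  exact ⟨hxy, main u v hnuv hre huv_le, main v u hnvu hvu_re hvu_le⟩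
end

section
/- (Theorem 2.1, necessity) Let H be a complex Hilbert space and L, M closed linear subspaces with Q = L ∩ M, and let A < ∞ be a constant. Suppose that every continuous linear functional f on L vanishing on Q admits a continuous linear extension f̃ on H with f̃(x) = f(x) for x ∈ L, f̃(x) = 0 for x ∈ M, and ‖f̃‖_{H*} ≤ A·‖f‖_{L*}. Then c(L,M) < 1. -/
open scoped InnerProductSpace Pointwise

lemma arith_aux (A p q a wn : ℝ) (hp : 0 < p) (hq : 0 < q) (ha : 0 ≤ a) (hA0 : 0 < A)
    (hwn : wn ^ 2 = q ^ 2 * (p ^ 2 * q ^ 2 - a ^ 2)) (hwpos : 0 ≤ wn)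
    (hkey : q ^ 2 * p ^ 2 ≤ A * p * wn) :
    a ^ 2 / (p ^ 2 * q ^ 2) ≤ 1 - 1 / A ^ 2 ∧ 1 ≤ A := by
  have hsq : (q ^ 2 * p ^ 2) ^ 2 ≤ (A * p * wn) ^ 2 :=
    pow_le_pow_left₀ (by positivity) hkey 2
  have hsq' : (q ^ 2 * p ^ 2) ^ 2 ≤ A ^ 2 * p ^ 2 * (q ^ 2 * (p ^ 2 * q ^ 2 - a ^ 2)) := by
    calc (q ^ 2 * p ^ 2) ^ 2 ≤ (A * p * wn) ^ 2 := hsq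
      _ = A ^ 2 * p ^ 2 * wn ^ 2 := by ring
      _ = _ := by rw [hwn]
  have hpq : 0 < p ^ 2 * q ^ 2 := by positivity
  have hmain : p ^ 2 * q ^ 2 ≤ A ^ 2 * (p ^ 2 * q ^ 2 - a ^ 2) := by
    nlinarith [hsq', hpq]
  have hA1 : 1 ≤ A := by
    have h1 : 1 ≤ A ^ 2 := by
      nlinarith [mul_nonneg (sq_nonneg A) (sq_nonneg a), hpq, hmain]
    nlinarith [hA0, h1]
  refine ⟨?_, hA1⟩
  rw [div_le_iff₀ hpq]
  have hx : A ^ 2 * (1 / A ^ 2) * (p ^ 2 * q ^ 2) = p ^ 2 * q ^ 2 := by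
    field_simp
  nlinarith [hmain, hx, pow_pos hA0 2]

theorem key_aux {H : Type*} [NormedAddCommGroup H] [InnerProductSpace ℂ H] [CompleteSpace H]
    (L M : Submodule ℂ H) (A : ℝ)
    (hext : ∀ f : L →L[ℂ] ℂ, (∀ x : L, (x : H) ∈ M → f x = 0) →
      ∃ g : H →L[ℂ] ℂ, (∀ x : L, g (x : H) = f x) ∧ (∀ x ∈ M, g x = 0) ∧
        ‖g‖ ≤ A * ‖f‖)
    (u : H) (huL : u ∈ L) (huQ : u ∈ (L ⊓ M : Submodule ℂ H)ᗮ) (hu0 : u ≠ 0)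
    (v : H) (hvM : v ∈ M) (hv0 : v ≠ 0) :
    ‖⟪u, v⟫_ℂ‖ ^ 2 / (‖u‖ ^ 2 * ‖v‖ ^ 2) ≤ 1 - 1 / A ^ 2 ∧ 1 ≤ A := by
  set f : L →L[ℂ] ℂ := (innerSL ℂ u).comp L.subtypeL with hf
  have hf0 : ∀ x : L, (x : H) ∈ M → f x = 0 := by
    intro x hxM
    have hxQ : (x : H) ∈ L ⊓ M := ⟨x.2, hxM⟩
    have h0 := (Submodule.mem_orthogonal _ u).1 huQ _ hxQ
    show ⟪u, (x : H)⟫_ℂ = 0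
    exact inner_eq_zero_symm.1 h0
  have hfn : ‖f‖ ≤ ‖u‖ := by
    refine ContinuousLinearMap.opNorm_le_bound _ (norm_nonneg u) fun x => ?_
    exact norm_inner_le_norm u (x : H)
  obtain ⟨g, hg1, hg2, hg3⟩ := hext f hf0
  set w : H := ((‖v‖ ^ 2 : ℝ) : ℂ) • u - ⟪v, u⟫_ℂ • v with hw
  have hgu : g u = ⟪u, u⟫_ℂ := hg1 ⟨u, huL⟩
  have hgv : g v = 0 := hg2 v hvM
  have hgw : g w = ((‖v‖ ^ 2 * ‖u‖ ^ 2 : ℝ) : ℂ) := by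
    simp only [hw, map_sub, map_smul, hgu, hgv, smul_eq_mul, mul_zero, sub_zero,
      inner_self_eq_norm_sq_to_K]
    push_cast
    rfl
  have hwn : ‖w‖ ^ 2 = ‖v‖ ^ 2 * (‖u‖ ^ 2 * ‖v‖ ^ 2 - ‖⟪u, v⟫_ℂ‖ ^ 2) := by
    have h1 := @norm_sub_sq ℂ _ _ _ _ (((‖v‖ ^ 2 : ℝ) : ℂ) • u) (⟪v, u⟫_ℂ • v)
    have h2 : ⟪((‖v‖ ^ 2 : ℝ) : ℂ) • u, ⟪v, u⟫_ℂ • v⟫_ℂ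
        = ((‖v‖ ^ 2 : ℝ) : ℂ) * (⟪v, u⟫_ℂ * ⟪u, v⟫_ℂ) := by
      rw [inner_smul_left, inner_smul_right]
      simp only [Complex.conj_ofReal]
    have h3 : ⟪v, u⟫_ℂ * ⟪u, v⟫_ℂ = ((‖⟪u, v⟫_ℂ‖ ^ 2 : ℝ) : ℂ) := by
      rw [← inner_conj_symm v u, RCLike.conj_mul]
      norm_cast
    rw [h2, h3, ← hw] at h1
    have e1 : ‖((‖v‖ ^ 2 : ℝ) : ℂ) • u‖ = ‖v‖ ^ 2 * ‖u‖ := by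
      rw [norm_smul, Complex.norm_real, Real.norm_of_nonneg (by positivity)]
    have e2 : ‖⟪v, u⟫_ℂ • v‖ = ‖⟪u, v⟫_ℂ‖ * ‖v‖ := by
      rw [norm_smul, norm_inner_symm]
    have e3 : RCLike.re (((‖v‖ ^ 2 : ℝ) : ℂ) * ((‖⟪u, v⟫_ℂ‖ ^ 2 : ℝ) : ℂ))
        = ‖v‖ ^ 2 * ‖⟪u, v⟫_ℂ‖ ^ 2 := by
      simp only [RCLike.re_to_complex, ← Complex.ofReal_mul, Complex.ofReal_re]
    rw [e1, e2, e3] at h1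
    rw [h1]; ring
  have hnu : 0 < ‖u‖ := norm_pos_iff.2 hu0
  have hnv : 0 < ‖v‖ := norm_pos_iff.2 hv0
  have hposuv : 0 < ‖v‖ ^ 2 * ‖u‖ ^ 2 := by positivity
  have key : ‖v‖ ^ 2 * ‖u‖ ^ 2 ≤ A * ‖f‖ * ‖w‖ := by
    calc ‖v‖ ^ 2 * ‖u‖ ^ 2
        = ‖g w‖ := by rw [hgw, Complex.norm_real, Real.norm_of_nonneg (by positivity)]
      _ ≤ ‖g‖ * ‖w‖ := g.le_opNorm w
      _ ≤ A * ‖f‖ * ‖w‖ := mul_le_mul_of_nonneg_right hg3 (norm_nonneg w)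
  have hA0 : 0 < A := by
    rcases lt_or_ge 0 A with h | h
    · exact h
    · exfalso
      have h1 : A * ‖f‖ * ‖w‖ ≤ 0 :=
        mul_nonpos_of_nonpos_of_nonneg
          (mul_nonpos_of_nonpos_of_nonneg h (norm_nonneg f)) (norm_nonneg w)
      linarith
  have key2 : ‖v‖ ^ 2 * ‖u‖ ^ 2 ≤ A * ‖u‖ * ‖w‖ := by
    refine key.trans ?_
    exact mul_le_mul_of_nonneg_right (mul_le_mul_of_nonneg_left hfn hA0.le) (norm_nonneg w)
  exact arith_aux A ‖u‖ ‖v‖ ‖⟪u, v⟫_ℂ‖ ‖w‖ hnu hnv (norm_nonneg _) hA0 hwn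
    (norm_nonneg w) key2

theorem stmt_6 {H : Type*} [NormedAddCommGroup H] [InnerProductSpace ℂ H] [CompleteSpace H]
    (L M : Submodule ℂ H) (hL : IsClosed (L : Set H)) (hM : IsClosed (M : Set H))
    (hLQ : ∃ u ∈ L ⊓ (L ⊓ M)ᗮ, u ≠ 0) (hMQ : ∃ v ∈ M ⊓ (L ⊓ M)ᗮ, v ≠ 0)
    (A : ℝ)
    (hext : ∀ f : L →L[ℂ] ℂ, (∀ x : L, (x : H) ∈ M → f x = 0) →
      ∃ g : H →L[ℂ] ℂ, (∀ x : L, g (x : H) = f x) ∧ (∀ x ∈ M, g x = 0) ∧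
        ‖g‖ ≤ A * ‖f‖) :
    inclination L M < 1 := by
  unfold inclination
  obtain ⟨u0, hu0m, hu00⟩ := hLQ
  obtain ⟨v0, hv0m, hv00⟩ := hMQ
  have h0 := key_aux L M A hext u0 hu0m.1 hu0m.2 hu00 v0 hv0m.1 hv00
  have hA1 : 1 ≤ A := h0.2
  have hApos : 0 < 1 / A ^ 2 := by positivity
  have hBnn : 0 ≤ 1 - 1 / A ^ 2 := by
    have : 1 / A ^ 2 ≤ 1 := by
      rw [div_le_one (by positivity)]
      nlinarith
    linarith
  have hBlt : Real.sqrt (1 - 1 / A ^ 2) < 1 := by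
    rw [Real.sqrt_lt' one_pos]
    nlinarith
  refine lt_of_le_of_lt ?_ hBlt
  refine Real.sSup_le ?_ (Real.sqrt_nonneg _)
  rintro r ⟨u, hu, v, hv, hune, hvne, rfl⟩
  have h := key_aux L M A hext u hu.1 hu.2 hune v hv.1 hvne
  have hnu : 0 < ‖u‖ := norm_pos_iff.2 hune
  have hnv : 0 < ‖v‖ := norm_pos_iff.2 hvne
  rw [Real.le_sqrt (by positivity) hBnn]
  calc (‖⟪u, v⟫_ℂ‖ / (‖u‖ * ‖v‖)) ^ 2 = ‖⟪u, v⟫_ℂ‖ ^ 2 / (‖u‖ ^ 2 * ‖v‖ ^ 2) := by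
        rw [div_pow, mul_pow]
    _ ≤ 1 - 1 / A ^ 2 := h.1
end

section
/- (Remark: necessity of condition 1 in Theorem 1.1) Let H be a complex Hilbert space and L, M closed linear subspaces, and let A₁ < ∞ be a constant. Suppose that every x ∈ H can be represented as x = x_L + x_M with x_L ∈ L, x_M ∈ M, and ‖x_L‖ ≤ A₁‖x‖. Then c(L,M) < 1. -/
/-!
If `u ∈ L ⊖ Q` and `v ∈ M`, split `u - v = x_L + x_M`. Then `u - x_L = v + x_M` lies in `Q`,
hence is orthogonal to `u`, and Pythagoras gives `‖u‖ ≤ ‖x_L‖ ≤ A₁ ‖u - v‖`. Applied to the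
projection of `u` onto a line `ℂ ∙ v ⊆ M`, for which `‖u - Pu‖² = ‖u‖² - |⟪u, v⟫|² / ‖v‖²`,
this bounds every quotient in the inclination by `√(1 - A₁⁻²) < 1`.
-/

open scoped InnerProductSpace Pointwise

theorem norm_sub_starProjection_singleton_sq {𝕜 E : Type*} [RCLike 𝕜] [NormedAddCommGroup E]
    [InnerProductSpace 𝕜 E] (u v : E) :
    ‖u - (𝕜 ∙ v).starProjection u‖ ^ 2 = ‖u‖ ^ 2 - ‖⟪v, u⟫_𝕜‖ ^ 2 / ‖v‖ ^ 2 := by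
  have hp : ‖(𝕜 ∙ v).starProjection u‖ ^ 2 = ‖⟪v, u⟫_𝕜‖ ^ 2 / ‖v‖ ^ 2 := by
    rw [Submodule.starProjection_singleton, norm_smul, norm_div, RCLike.norm_ofReal,
      abs_of_nonneg (by positivity)]
    rcases eq_or_ne v 0 with rfl | hv
    · simp
    · field_simp
  set p := (𝕜 ∙ v).starProjection u
  have hperp : ⟪p, u - p⟫_𝕜 = 0 :=
    Submodule.inner_right_of_mem_orthogonal (Submodule.coe_mem _)
      (Submodule.sub_starProjection_mem_orthogonal u)
  have hpyth := norm_add_sq_eq_norm_sq_add_norm_sq_of_inner_eq_zero p (u - p) hperp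
  rw [add_sub_cancel] at hpyth
  nlinarith [hpyth, hp]

section Decomposition

variable {H : Type*} [NormedAddCommGroup H] [InnerProductSpace ℂ H] {L M : Submodule ℂ H} {A : ℝ}

def HasBoundedDecomposition (L M : Submodule ℂ H) (A : ℝ) : Prop :=
  ∀ x : H, ∃ xL ∈ L, ∃ xM ∈ M, x = xL + xM ∧ ‖xL‖ ≤ A * ‖x‖

theorem norm_le_mul_norm_sub_of_decomposition
    (hdec : HasBoundedDecomposition L M A)
    {u v : H} (hu : u ∈ L ⊓ (L ⊓ M)ᗮ) (hv : v ∈ M) : ‖u‖ ≤ A * ‖u - v‖ := by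
  obtain ⟨xL, hxL, xM, hxM, hx, hbound⟩ := hdec (u - v)
  have hmem : xL - u ∈ L ⊓ M := by
    refine ⟨sub_mem hxL hu.1, ?_⟩
    rw [show xL - u = -(v + xM) by linear_combination (norm := module) -hx]
    exact neg_mem (add_mem hv hxM)
  have hperp : ⟪u, xL - u⟫_ℂ = 0 := Submodule.inner_left_of_mem_orthogonal hmem hu.2
  have hpyth := norm_add_sq_eq_norm_sq_add_norm_sq_of_inner_eq_zero u (xL - u) hperp
  rw [add_sub_cancel] at hpyth
  have hnorm : ‖u‖ ≤ ‖xL‖ := by nlinarith [norm_nonneg u, norm_nonneg xL, norm_nonneg (xL - u)]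
  exact hnorm.trans hbound

theorem norm_inner_div_le_sqrt_of_decomposition
    (hdec : HasBoundedDecomposition L M A)
    {u v : H} (hu : u ∈ L ⊓ (L ⊓ M)ᗮ) (hv : v ∈ M) :
    ‖⟪u, v⟫_ℂ‖ / (‖u‖ * ‖v‖) ≤ √(1 - 1 / A ^ 2) := by
  rcases (by positivity : 0 ≤ ‖⟪u, v⟫_ℂ‖ / (‖u‖ * ‖v‖)).eq_or_lt with h0 | hpos
  · exact h0 ▸ Real.sqrt_nonneg _
  have hu0 : 0 < ‖u‖ := by
    by_contra! h; simp [norm_le_zero_iff.mp h] at hpos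
  have hv0 : 0 < ‖v‖ := by
    by_contra! h; simp [norm_le_zero_iff.mp h] at hpos
  have hdist := norm_le_mul_norm_sub_of_decomposition hdec hu
    ((Submodule.span_singleton_le_iff_mem v M).2 hv ((ℂ ∙ v).starProjection_apply_mem u))
  have hsq := norm_sub_starProjection_singleton_sq (𝕜 := ℂ) u v
  rw [norm_inner_symm] at hsq
  have hA : A ≠ 0 := by
    rintro rfl
    linarith [zero_mul ‖u - (ℂ ∙ v).starProjection u‖]
  have key : ‖u‖ ^ 2 ≤ A ^ 2 * (‖u‖ ^ 2 - ‖⟪u, v⟫_ℂ‖ ^ 2 / ‖v‖ ^ 2) := by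
    rw [← hsq, ← mul_pow]
    exact pow_le_pow_left₀ (norm_nonneg u) hdist 2
  apply Real.le_sqrt_of_sq_le
  rw [div_pow, mul_pow, le_sub_iff_add_le, ← le_sub_iff_add_le', div_le_iff₀ (by positivity)]
  field_simp at key ⊢
  exact key

theorem inclination_le_sqrt_of_decomposition (hdec : HasBoundedDecomposition L M A) :
    inclination L M ≤ √(1 - 1 / A ^ 2) :=
  Real.sSup_le (fun _ ⟨_, hu, _, hv, _, _, hr⟩ ↦
      hr ▸ norm_inner_div_le_sqrt_of_decomposition hdec hu hv.1)
    (Real.sqrt_nonneg _)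

end Decomposition

theorem stmt_8_general {H : Type*} [NormedAddCommGroup H] [InnerProductSpace ℂ H]
    (L M : Submodule ℂ H)
    (hLQ : ∃ u ∈ L ⊓ (L ⊓ M)ᗮ, u ≠ 0)
    (A₁ : ℝ)
    (hdec : ∀ x : H, ∃ xL ∈ L, ∃ xM ∈ M, x = xL + xM ∧ ‖xL‖ ≤ A₁ * ‖x‖) :
    inclination L M < 1 := by
  obtain ⟨u, hu, hu0⟩ := hLQ
  have hA : A₁ ≠ 0 := by
    rintro rfl
    simpa [hu0] using norm_le_mul_norm_sub_of_decomposition hdec hu M.zero_mem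
  calc inclination L M ≤ √(1 - 1 / A₁ ^ 2) := inclination_le_sqrt_of_decomposition hdec
    _ < 1 := by
      rw [Real.sqrt_lt' one_pos]
      have : 0 < 1 / A₁ ^ 2 := by positivity
      linarith

theorem stmt_8 {H : Type*} [NormedAddCommGroup H] [InnerProductSpace ℂ H] [CompleteSpace H]
    (L M : Submodule ℂ H) (hL : IsClosed (L : Set H)) (hM : IsClosed (M : Set H))
    (hLQ : ∃ u ∈ L ⊓ (L ⊓ M)ᗮ, u ≠ 0) (hMQ : ∃ v ∈ M ⊓ (L ⊓ M)ᗮ, v ≠ 0)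
    (A₁ : ℝ)
    (hdec : ∀ x : H, ∃ xL ∈ L, ∃ xM ∈ M, x = xL + xM ∧ ‖xL‖ ≤ A₁ * ‖x‖) :
    inclination L M < 1 :=
  stmt_8_general L M hLQ A₁ hdec
end
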